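/- arXiv:1406.7552 — 3 statements merged into one kernel-verified Lean document; each statement's English description precedes it below -/
import Mathlib

section
/- Let n and m be two positive integers with m ≤ n/11. Every tournament T on n vertices contains two disjoint sets of distinct vertices {x_1, ..., x_m} and {y_1, ..., y_m} such that for any permutation σ of {1, ..., m} there are pairwise vertex-disjoint directed paths P_1, ..., P_m in T such that P_i goes from x_i to y_{σ(i)}. -/
/-- `Adj` is a tournament relation: no loops, and there is exactly one directed
edge between any two distinct vertices. -/
def IsTournament {V : Type*} (Adj : V → V → Prop) : Prop :=
  (∀ v, ¬ Adj v v) ∧ ∀ u v : V, u ≠ v → (Adj u v ↔ ¬ Adj v u)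

/-- `p` is a directed path from `x` to `y`: a nonempty list of distinct vertices,
starting at `x`, ending at `y`, in which consecutive vertices are joined by a
directed edge in the forward direction. -/
def IsDipath {V : Type*} (Adj : V → V → Prop) (x y : V) (p : List V) : Prop :=
  p ≠ [] ∧ p.Nodup ∧ p.Chain' Adj ∧ p.head? = some x ∧ p.getLast? = some y


/-!
If some set of at least `m` vertices dominates another set of at least `m` vertices, single edges
form the linkage. Otherwise, for every set `R` of at least `m` vertices, fewer than `m` vertices are
dominated by all of `R`. Counting edges gives `m` vertices of out-degree at least `5m` and, disjoint
from them, `m` vertices of in-degree at least `5m`, and any pairing of these can be linked greedily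
by paths with at most two inner vertices: when `x` is linked to `y`, at most `4m - 2` vertices are
forbidden, so `x` keeps many out-neighbours and `y` keeps a set `R` of at least `m` in-neighbours,
and some out-neighbour of `x` that is not dominated by `R ∪ {y}` reaches `y` in one or two steps.
-/

open Finset Function

theorem Finset.exists_disjoint_subsets_card_eq {α : Type*} [DecidableEq α] {A B : Finset α}
    {m : ℕ} (hA : m ≤ #A) (hB : m ≤ #B) (hAB : 2 * m ≤ #(A ∪ B)) :
    ∃ X ⊆ A, ∃ Y ⊆ B, #X = m ∧ #Y = m ∧ Disjoint X Y := by
  obtain ⟨X, hXA, hX, hBX⟩ : ∃ X ⊆ A, #X = m ∧ m ≤ #(B \ X) := by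
    by_cases hm : m ≤ #(A \ B)
    · obtain ⟨X, hXAB, hX⟩ := exists_subset_card_eq hm
      have hXB : Disjoint B X := disjoint_sdiff.mono_right hXAB
      exact ⟨X, hXAB.trans sdiff_subset, hX, by rwa [sdiff_eq_self_of_disjoint hXB]⟩
    · obtain ⟨X, hABX, hXA, hX⟩ := exists_subsuperset_card_eq sdiff_subset (not_le.1 hm).le hA
      refine ⟨X, hXA, hX, ?_⟩
      have hsub : (A ∪ B) \ X ⊆ B \ X := by
        intro v hv
        simp only [mem_sdiff, mem_union] at hv ⊢
        refine ⟨?_, hv.2⟩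
        by_contra hvB
        exact hv.2 (hABX (mem_sdiff.2 ⟨hv.1.resolve_right hvB, hvB⟩))
      have := le_card_sdiff X (A ∪ B)
      have := card_le_card hsub
      omega
  obtain ⟨Y, hYBX, hY⟩ := exists_subset_card_eq hBX
  exact ⟨X, hXA, Y, hYBX.trans sdiff_subset, hX, hY, disjoint_sdiff.mono_right hYBX⟩

theorem Finset.exists_injective_fin_mem {α : Type*} {X : Finset α} {m : ℕ} (hX : m ≤ #X) :
    ∃ x : Fin m → α, Injective x ∧ ∀ i, x i ∈ X :=
  ⟨fun i => X.equivFin.symm (Fin.castLE hX i),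
    Subtype.val_injective.comp (X.equivFin.symm.injective.comp (Fin.castLE_injective hX)),
    fun _ => (X.equivFin.symm _).2⟩

theorem exists_pairwise_disjoint_of_forall_exists_avoiding {ι α : Type*} [Fintype ι]
    [DecidableEq ι] [DecidableEq α] (p : ι → List α → Prop) (c : ℕ)
    (h : ∀ i (B : Finset α), #B ≤ c * (Fintype.card ι - 1) →
      ∃ l, p i l ∧ l.length ≤ c ∧ ∀ v ∈ l, v ∉ B) :
    ∃ Q : ι → List α, (∀ i, p i (Q i)) ∧ Pairwise (List.Disjoint on Q) := by
  suffices H : ∀ s : Finset ι, ∃ Q : ι → List α,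
      (∀ i ∈ s, p i (Q i) ∧ (Q i).length ≤ c) ∧ (s : Set ι).Pairwise (List.Disjoint on Q) by
    obtain ⟨Q, hQ, hdisj⟩ := H univ
    exact ⟨Q, fun i => (hQ i (mem_univ i)).1, Set.pairwise_univ.1 (by simpa using hdisj)⟩
  intro s
  induction s using Finset.induction_on with
  | empty => exact ⟨fun _ => [], by simp, by simp⟩
  | insert a s ha ih =>
    obtain ⟨Q, hQ, hdisj⟩ := ih
    set B := s.biUnion fun j => (Q j).toFinset
    have hB : #B ≤ c * (Fintype.card ι - 1) := calc
      #B ≤ ∑ j ∈ s, #(Q j).toFinset := card_biUnion_le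
      _ ≤ ∑ j ∈ s, c := sum_le_sum fun j hj => (List.toFinset_card_le _).trans (hQ j hj).2
      _ = c * #s := by rw [sum_const, smul_eq_mul, mul_comm]
      _ ≤ c * (Fintype.card ι - 1) := by
        gcongr
        rw [← card_univ, ← card_erase_of_mem (mem_univ a)]
        exact card_le_card fun j hj => mem_erase.2 ⟨ne_of_mem_of_not_mem hj ha, mem_univ j⟩
    obtain ⟨l, hpl, hl, hlB⟩ := h a B hB
    have hQs : ∀ j ∈ s, update Q a l j = Q j := fun j hj =>
      update_of_ne (ne_of_mem_of_not_mem hj ha) _ _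
    refine ⟨update Q a l, fun i hi => ?_, ?_⟩
    · rcases mem_insert.1 hi with rfl | hi
      · simp [hpl, hl]
      · rw [hQs i hi]
        exact hQ i hi
    · rw [coe_insert, Set.pairwise_insert]
      refine ⟨fun i hi j hj hij => ?_, fun j hj _ => ?_⟩
      · simpa only [onFun, hQs i hi, hQs j hj] using hdisj hi hj hij
      · have hlQ : l.Disjoint (Q j) := fun v hvl hvj =>
          hlB v hvl (mem_biUnion.2 ⟨j, hj, List.mem_toFinset.2 hvj⟩)
        simpa only [onFun, update_self, hQs j hj] using ⟨hlQ, hlQ.symm⟩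

theorem isDipath_cons_append {V : Type*} {Adj : V → V → Prop} {x y : V} {I : List V}
    (hxy : x ≠ y) (hxI : x ∉ I) (hyI : y ∉ I) (hI : I.Nodup) (h : (x :: (I ++ [y])).IsChain Adj) :
    IsDipath Adj x y (x :: (I ++ [y])) := by
  refine ⟨List.cons_ne_nil _ _, ?_, h, rfl, List.getLast?_concat (l := x :: I)⟩
  simpa [List.nodup_append, hxy, hxI, hI] using fun v hv (h : v = y) => hyI (h ▸ hv)

def HasPermutationLinkage {V : Type*} (Adj : V → V → Prop) (m : ℕ) : Prop :=
  ∃ x y : Fin m → V,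
    Injective x ∧ Injective y ∧ (∀ i j, x i ≠ y j) ∧
    ∀ σ : Equiv.Perm (Fin m), ∃ P : Fin m → List V,
      (∀ i, IsDipath Adj (x i) (y (σ i)) (P i)) ∧
      ∀ i j, i ≠ j → ∀ v, v ∈ P i → v ∉ P j

theorem hasPermutationLinkage_of_forall_exists_interiors {V : Type*} [DecidableEq V]
    {Adj : V → V → Prop} {m : ℕ} {X Y : Finset V} (hXY : Disjoint X Y) (hX : m ≤ #X)
    (hY : m ≤ #Y)
    (h : ∀ a b : Fin m → V, (∀ i, a i ∈ X) → (∀ i, b i ∈ Y) → ∃ Q : Fin m → List V,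
      Pairwise (List.Disjoint on Q) ∧
        ∀ i, (∀ v ∈ Q i, v ∉ X ∪ Y) ∧ IsDipath Adj (a i) (b i) (a i :: (Q i ++ [b i]))) :
    HasPermutationLinkage Adj m := by
  obtain ⟨x, hx, hxX⟩ := exists_injective_fin_mem hX
  obtain ⟨y, hy, hyY⟩ := exists_injective_fin_mem hY
  have hxy : ∀ i j, x i ≠ y j := fun i j h => disjoint_left.1 hXY (hxX i) (h ▸ hyY j)
  refine ⟨x, y, hx, hy, hxy, fun σ => ?_⟩
  obtain ⟨Q, hQ, hQXY⟩ := h x (y ∘ σ) hxX fun i => hyY (σ i)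
  refine ⟨fun i => x i :: (Q i ++ [y (σ i)]), fun i => (hQXY i).2, fun i j hij v hvi hvj => ?_⟩
  have hQX : ∀ i, ∀ v ∈ Q i, v ∉ X := fun i v hv hvX => (hQXY i).1 v hv (mem_union_left _ hvX)
  have hQY : ∀ i, ∀ v ∈ Q i, v ∉ Y := fun i v hv hvY => (hQXY i).1 v hv (mem_union_right _ hvY)
  simp only [List.mem_cons, List.mem_append, List.not_mem_nil, or_false] at hvi hvj
  rcases hvi with rfl | hvi | rfl <;> rcases hvj with h | hvj | h
  · exact hij (hx h)
  · exact hQX j _ hvj (hxX i)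
  · exact hxy i _ h
  · exact hQX i _ hvi (h ▸ hxX j)
  · exact hQ hij hvi hvj
  · exact hQY i _ hvi (h ▸ hyY _)
  · exact hxy j _ h.symm
  · exact hQY j _ hvj (hyY _)
  · exact hij (σ.injective (hy h))

namespace IsTournament

variable {V : Type*} {Adj : V → V → Prop}

theorem ne_of_adj (hT : IsTournament Adj) {u v : V} (h : Adj u v) : u ≠ v := by
  rintro rfl
  exact hT.1 u h

theorem adj_of_not_adj (hT : IsTournament Adj) {u v : V} (huv : u ≠ v) (h : ¬Adj u v) :
    Adj v u :=
  (hT.2 v u huv.symm).2 h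

theorem swap (hT : IsTournament Adj) : IsTournament (swap Adj) :=
  ⟨hT.1, fun u v huv => hT.2 v u huv.symm⟩

variable [DecidableEq V]

theorem hasPermutationLinkage_of_complete_bipartite (hT : IsTournament Adj) {m : ℕ}
    {X Y : Finset V} (hX : m ≤ #X) (hY : m ≤ #Y) (hXY : ∀ x ∈ X, ∀ y ∈ Y, Adj x y) :
    HasPermutationLinkage Adj m := by
  have hdisj : Disjoint X Y := disjoint_left.2 fun x hx hy => hT.1 x (hXY x hx x hy)
  refine hasPermutationLinkage_of_forall_exists_interiors hdisj hX hY fun a b ha hb =>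
    ⟨fun _ => [], fun _ _ _ => List.disjoint_nil_left [], fun i => ⟨by simp, ?_⟩⟩
  have hab := hXY _ (ha i) _ (hb i)
  exact isDipath_cons_append (hT.ne_of_adj hab) List.not_mem_nil List.not_mem_nil List.nodup_nil
    (by simpa using hab)

variable [DecidableRel Adj]

-- `S.bipartiteAbove Adj v` and `S.bipartiteBelow Adj v` are the out- and in-neighbourhood of `v`
-- in `S`.

theorem card_bipartiteAbove_add_card_bipartiteBelow (hT : IsTournament Adj) {S : Finset V}
    {v : V} (hv : v ∈ S) : #(S.bipartiteAbove Adj v) + #(S.bipartiteBelow Adj v) = #S - 1 := by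
  rw [← card_erase_of_mem hv, ← card_filter_add_card_filter_not (s := S.erase v) (Adj v ·)]
  congr 2
  · ext u
    simp only [mem_bipartiteAbove, mem_filter, mem_erase]
    exact ⟨fun h => ⟨⟨(hT.ne_of_adj h.2).symm, h.1⟩, h.2⟩, fun h => ⟨h.1.2, h.2⟩⟩
  · ext u
    simp only [mem_bipartiteBelow, mem_filter, mem_erase]
    exact ⟨fun h => ⟨⟨hT.ne_of_adj h.2, h.1⟩, (hT.2 u v (hT.ne_of_adj h.2)).1 h.2⟩,
      fun h => ⟨h.1.2, hT.adj_of_not_adj h.1.1.symm h.2⟩⟩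

theorem card_le_of_forall_card_bipartiteAbove_le (hT : IsTournament Adj) {S : Finset V} {D : ℕ}
    (hD : ∀ v ∈ S, #(S.bipartiteAbove Adj v) ≤ D) : #S ≤ 2 * D + 1 := by
  have hsum : ∑ v ∈ S, (#S - 1) = 2 * ∑ v ∈ S, #(S.bipartiteAbove Adj v) := by
    rw [two_mul]
    nth_rw 2 [sum_card_bipartiteAbove_eq_sum_card_bipartiteBelow]
    rw [← sum_add_distrib]
    exact sum_congr rfl fun v hv => (hT.card_bipartiteAbove_add_card_bipartiteBelow hv).symm
  have hle : #S * (#S - 1) ≤ #S * (2 * D) := by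
    calc #S * (#S - 1) = 2 * ∑ v ∈ S, #(S.bipartiteAbove Adj v) := by
          rw [← hsum, sum_const, smul_eq_mul]
      _ ≤ 2 * ∑ v ∈ S, D := by gcongr with v hv; exact hD v hv
      _ = #S * (2 * D) := by rw [sum_const, smul_eq_mul]; ring
  rcases (#S).eq_zero_or_pos with h | h
  · omega
  · have := Nat.le_of_mul_le_mul_left hle h
    omega

variable [Fintype V]

theorem card_le_card_filter_le_card_bipartiteAbove (hT : IsTournament Adj) (D : ℕ) :
    Fintype.card V ≤ #{v | D ≤ #(univ.bipartiteAbove Adj v)} + (2 * D - 1) := by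
  have hL : #{v | ¬D ≤ #(univ.bipartiteAbove Adj v)} ≤ 2 * D - 1 := by
    rcases Nat.eq_zero_or_pos D with rfl | hD
    · simp
    have := hT.card_le_of_forall_card_bipartiteAbove_le (D := D - 1)
      (S := {v | ¬D ≤ #(univ.bipartiteAbove Adj v)}) fun v hv =>
      (card_le_card (filter_subset_filter _ (subset_univ _))).trans
        (Nat.le_pred_of_lt (not_le.1 (mem_filter.1 hv).2))
    omega
  have := card_filter_add_card_filter_not (s := univ) fun v => D ≤ #(univ.bipartiteAbove Adj v)
  rw [card_univ] at this
  omega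

theorem exists_disjoint_high_outdeg_high_indeg (hT : IsTournament Adj) {m D : ℕ} (hmD : m ≤ D)
    (hD : 2 * D + m ≤ Fintype.card V) :
    ∃ X Y : Finset V, #X = m ∧ #Y = m ∧ Disjoint X Y ∧
      (∀ v ∈ X, D ≤ #(univ.bipartiteAbove Adj v)) ∧ ∀ v ∈ Y, D ≤ #(univ.bipartiteBelow Adj v) := by
  have hout := hT.card_le_card_filter_le_card_bipartiteAbove D
  have hin : Fintype.card V ≤ #{v | D ≤ #(univ.bipartiteBelow Adj v)} + (2 * D - 1) :=
    hT.swap.card_le_card_filter_le_card_bipartiteAbove D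
  set Hout : Finset V := {v | D ≤ #(univ.bipartiteAbove Adj v)}
  set Hin : Finset V := {v | D ≤ #(univ.bipartiteBelow Adj v)}
  have hcover : Hout ∪ Hin = univ := by
    refine eq_univ_of_forall fun v => ?_
    have := hT.card_bipartiteAbove_add_card_bipartiteBelow (mem_univ v)
    rw [card_univ] at this
    simp only [Hout, Hin, mem_union, mem_filter, mem_univ, true_and]
    omega
  obtain ⟨X, hX, Y, hY, hXm, hYm, hXY⟩ := exists_disjoint_subsets_card_eq (A := Hout) (B := Hin)
    (m := m) (by omega) (by omega) (by rw [hcover, card_univ]; omega)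
  exact ⟨X, Y, hXm, hYm, hXY, fun v hv => (mem_filter.1 (hX hv)).2,
    fun v hv => (mem_filter.1 (hY hv)).2⟩

/-- The set `R = {y} ∪ (N⁻(y) \ B)` has at least `m` vertices, so some out-neighbour `a ∉ B` of `x`
is not dominated by all of `R`; then `a → y` or `a → r → y` for some `r ∈ R`. -/
theorem exists_short_dipath_avoiding (hT : IsTournament Adj) {m : ℕ}
    (hdom : ∀ R : Finset V, m ≤ #R → #{v | ∀ r ∈ R, Adj r v} < m)
    {B : Finset V} {x y : V} (hxB : x ∈ B) (hyB : y ∈ B) (hxy : x ≠ y)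
    (hx : #B + m ≤ #(univ.bipartiteAbove Adj x))
    (hy : #B + m ≤ #(univ.bipartiteBelow Adj y) + 1) :
    ∃ I : List V, I.length ≤ 2 ∧ (∀ v ∈ I, v ∉ B) ∧ IsDipath Adj x y (x :: (I ++ [y])) := by
  set R := insert y (univ.bipartiteBelow Adj y \ B)
  have hR : m ≤ #R := by
    rw [card_insert_of_notMem fun h => (mem_sdiff.1 h).2 hyB]
    have := le_card_sdiff B (univ.bipartiteBelow Adj y)
    omega
  obtain ⟨a, ha⟩ :
      ((univ.bipartiteAbove Adj x \ B) \ ({v | ∀ r ∈ R, Adj r v} : Finset V)).Nonempty := by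
    rw [← card_pos]
    have := hdom R hR
    have := le_card_sdiff B (univ.bipartiteAbove Adj x)
    have := le_card_sdiff {v | ∀ r ∈ R, Adj r v} (univ.bipartiteAbove Adj x \ B)
    omega
  simp only [mem_sdiff, mem_bipartiteAbove, mem_filter, mem_univ, true_and, not_forall] at ha
  obtain ⟨⟨hxa, haB⟩, r, hrR, hra⟩ := ha
  have hxa' : x ≠ a := hT.ne_of_adj hxa
  have hya : y ≠ a := fun h => haB (h ▸ hyB)
  by_cases hay : Adj a y
  · refine ⟨[a], by simp, by simpa, isDipath_cons_append hxy (by simpa) (by simpa)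
      (List.nodup_singleton a) (by simp [hxa, hay])⟩
  have hry : r ≠ y := by
    rintro rfl
    exact hay (hT.adj_of_not_adj hya hra)
  obtain ⟨hry', hrB⟩ : Adj r y ∧ r ∉ B := by simpa [R, hry] using hrR
  have hxr : x ≠ r := fun h => hrB (h ▸ hxB)
  have hra' : r ≠ a := by
    rintro rfl
    exact hay hry'
  refine ⟨[a, r], by simp, ?_, isDipath_cons_append hxy ?_ ?_ (by simpa using hra'.symm) ?_⟩
  · simp [haB, hrB]
  · simp [hxa', hxr]
  · simp [hry.symm, hya]
  · simp [hxa, hT.adj_of_not_adj hra' hra, hry']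

theorem hasPermutationLinkage_of_no_complete_bipartite (hT : IsTournament Adj) {m : ℕ}
    (hdom : ∀ R : Finset V, m ≤ #R → #{v | ∀ r ∈ R, Adj r v} < m)
    (hm : 11 * m ≤ Fintype.card V) :
    HasPermutationLinkage Adj m := by
  obtain ⟨X, Y, hX, hY, hXY, hXout, hYin⟩ :=
    hT.exists_disjoint_high_outdeg_high_indeg (m := m) (D := 5 * m) (by omega) (by omega)
  refine hasPermutationLinkage_of_forall_exists_interiors hXY hX.ge hY.ge fun a b ha hb => ?_
  have hXY2 : #(X ∪ Y) = 2 * m := by rw [card_union_of_disjoint hXY]; omega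
  have hstep : ∀ i (B : Finset V), #B ≤ 2 * (Fintype.card (Fin m) - 1) → ∃ I : List V,
      ((∀ v ∈ I, v ∉ X ∪ Y) ∧ IsDipath Adj (a i) (b i) (a i :: (I ++ [b i]))) ∧
        I.length ≤ 2 ∧ ∀ v ∈ I, v ∉ B := by
    intro i B hB
    have hB' : #(B ∪ (X ∪ Y)) ≤ 4 * m - 2 := by
      have := card_union_le B (X ∪ Y)
      rw [Fintype.card_fin] at hB
      omega
    have hab : a i ≠ b i := fun h => disjoint_left.1 hXY (ha i) (h ▸ hb i)
    obtain ⟨I, hI, hIB, hpath⟩ := hT.exists_short_dipath_avoiding hdom (B := B ∪ (X ∪ Y))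
      (mem_union_right _ (mem_union_left _ (ha i))) (mem_union_right _ (mem_union_right _ (hb i)))
      hab (by have := hXout _ (ha i); omega) (by have := hYin _ (hb i); omega)
    exact ⟨I, ⟨fun v hv h => hIB v hv (mem_union_right _ h), hpath⟩, hI,
      fun v hv h => hIB v hv (mem_union_left _ h)⟩
  obtain ⟨Q, hQ, hQd⟩ := exists_pairwise_disjoint_of_forall_exists_avoiding _ 2 hstep
  exact ⟨Q, hQd, hQ⟩

end IsTournament

theorem tournament_contains_large_linkage_general
    {V : Type*} [Fintype V] (Adj : V → V → Prop)
    (hT : IsTournament Adj) (n m : ℕ) (hn : Fintype.card V = n)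
    (hmn : 11 * m ≤ n) :
    ∃ x y : Fin m → V,
      Function.Injective x ∧ Function.Injective y ∧ (∀ i j, x i ≠ y j) ∧
      ∀ σ : Equiv.Perm (Fin m), ∃ P : Fin m → List V,
        (∀ i, IsDipath Adj (x i) (y (σ i)) (P i)) ∧
        ∀ i j, i ≠ j → ∀ v, v ∈ P i → v ∉ P j := by
  classical
  by_cases hdom : ∃ R : Finset V, m ≤ #R ∧ m ≤ #({v | ∀ r ∈ R, Adj r v} : Finset V)
  · obtain ⟨R, hR, hRdom⟩ := hdom
    exact hT.hasPermutationLinkage_of_complete_bipartite hR hRdom fun r hr v hv =>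
      (mem_filter.1 hv).2 r hr
  · push Not at hdom
    exact hT.hasPermutationLinkage_of_no_complete_bipartite hdom (hn ▸ hmn)

/-- Every tournament on `n` vertices, where `m ≤ n/11` and `m ≥ 1`, contains two
disjoint sets of distinct vertices `{x_1, …, x_m}` and `{y_1, …, y_m}` such that
for any permutation `σ` of `[m]` there are vertex-disjoint directed paths
`P_1, …, P_m` with `P_i` going from `x_i` to `y_{σ(i)}`. -/
theorem tournament_contains_large_linkage
    {V : Type*} [Fintype V] [DecidableEq V] (Adj : V → V → Prop)
    (hT : IsTournament Adj) (n m : ℕ) (hn : Fintype.card V = n)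
    (hm : 1 ≤ m) (hmn : 11 * m ≤ n) :
    ∃ x y : Fin m → V,
      Function.Injective x ∧ Function.Injective y ∧ (∀ i j, x i ≠ y j) ∧
      ∀ σ : Equiv.Perm (Fin m), ∃ P : Fin m → List V,
        (∀ i, IsDipath Adj (x i) (y (σ i)) (P i)) ∧
        ∀ i j, i ≠ j → ∀ v, v ∈ P i → v ∉ P j :=
  tournament_contains_large_linkage_general Adj hT n m hn hmn
end

section
/- Let (v_1, v_2, ..., v_k) be a partial greedy in-dominating set in a tournament T, and let E be the set of vertices of T which are not in-dominated by {v_1, ..., v_k} (i.e. the vertices u outside {v_1,...,v_k} such that u v_i is not an edge for any i). Then every u ∈ E satisfies d^+(u) ≥ 2^{k-1} |E|, where d^+(u) is the out-degree of u in T. -/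
/-- The out-degree of `u`: the number of vertices `w` with an edge `u → w`. -/
noncomputable def outDeg {V : Type*} (Adj : V → V → Prop) (u : V) : ℕ :=
  {w | Adj u w}.ncard

/-- The in-degree of `u` within the subtournament induced on `A`: the number of
vertices `w ∈ A` with an edge `w → u`. -/
noncomputable def inDegOn {V : Type*} (Adj : V → V → Prop) (A : Set V) (u : V) : ℕ :=
  {w ∈ A | Adj w u}.ncard

/-- `N⁺(v_1) ∩ ⋯ ∩ N⁺(v_{i-1})`, the common out-neighbourhood of the first `i`
vertices of the sequence `v` (the whole vertex set when `i = 0`). -/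
def greedySet {V : Type*} (Adj : V → V → Prop) {k : ℕ} (v : Fin k → V) (i : Fin k) : Set V :=
  {u | ∀ j : Fin k, j < i → Adj (v j) u}

/-- `(v_1, …, v_k)` is a partial greedy in-dominating set: each `v_i` is a vertex of
maximum in-degree in the subtournament induced on `N⁺(v_1) ∩ ⋯ ∩ N⁺(v_{i-1})`. -/
def IsPartialGreedyInDomSeq {V : Type*} (Adj : V → V → Prop) {k : ℕ} (v : Fin k → V) : Prop :=
  ∀ i : Fin k, v i ∈ greedySet Adj v i ∧
    ∀ u ∈ greedySet Adj v i,
      inDegOn Adj (greedySet Adj v i) u ≤ inDegOn Adj (greedySet Adj v i) (v i)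

open Finset

theorem inDegOn_coe_finset {V : Type*} (Adj : V → V → Prop) [DecidableRel Adj]
    (A : Finset V) (x : V) : inDegOn Adj (A : Set V) x = #{w ∈ A | Adj w x} := by
  rw [inDegOn, ← Set.ncard_coe_finset, coe_filter]
  rfl

theorem outDeg_eq_card {V : Type*} [Fintype V] (Adj : V → V → Prop) [DecidableRel Adj]
    (u : V) : outDeg Adj u = #{w | Adj u w} := by
  rw [outDeg, ← Set.ncard_coe_finset, coe_filter_univ]

theorem Finset.sum_card_filter_rel_eq_sum_card_filter_flip {V : Type*} (R : V → V → Prop)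
    [DecidableRel R] (A : Finset V) :
    ∑ x ∈ A, #{w ∈ A | R w x} = ∑ x ∈ A, #{w ∈ A | R x w} := by
  simp_rw [card_filter]
  exact sum_comm

namespace IsTournament

variable {V : Type*} {Adj : V → V → Prop} [DecidableRel Adj]

theorem card_eq_inDeg_add_outDeg_add_one (hT : IsTournament Adj) {A : Finset V} {x : V}
    (hx : x ∈ A) : #A = #{w ∈ A | Adj w x} + #{w ∈ A | Adj x w} + 1 := by
  classical
  have h_not_in : {w ∈ A | ¬ Adj w x} = insert x {w ∈ A | Adj x w} := by
    ext w
    rcases eq_or_ne w x with rfl | hwx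
    · simp [hx, hT.1 w]
    · simp [hwx, hT.2 x w hwx.symm]
  rw [← card_filter_add_card_filter_not (fun w => Adj w x), h_not_in,
    card_insert_of_notMem (by simp [hT.1 x]), ← add_assoc]

theorem outDeg_le_inDeg_of_forall_inDeg_le (hT : IsTournament Adj) {A : Finset V} {x : V}
    (hx : x ∈ A) (hmax : ∀ u ∈ A, #{w ∈ A | Adj w u} ≤ #{w ∈ A | Adj w x}) :
    #{w ∈ A | Adj x w} ≤ #{w ∈ A | Adj w x} := by
  have h : #A * (#{w ∈ A | Adj w x} + #{w ∈ A | Adj x w} + 1) ≤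
      #A * (#{w ∈ A | Adj w x} + #{w ∈ A | Adj w x} + 1) :=
    calc #A * (#{w ∈ A | Adj w x} + #{w ∈ A | Adj x w} + 1)
        = ∑ u ∈ A, (#{w ∈ A | Adj w u} + #{w ∈ A | Adj u w} + 1) := by
          rw [← hT.card_eq_inDeg_add_outDeg_add_one hx,
            sum_congr rfl fun u hu => (hT.card_eq_inDeg_add_outDeg_add_one hu).symm,
            sum_const, smul_eq_mul]
      _ = ∑ u ∈ A, (#{w ∈ A | Adj w u} + #{w ∈ A | Adj w u} + 1) := by
          rw [sum_add_distrib, sum_add_distrib, sum_add_distrib, sum_add_distrib,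
            ← sum_card_filter_rel_eq_sum_card_filter_flip Adj A]
      _ ≤ ∑ _u ∈ A, (#{w ∈ A | Adj w x} + #{w ∈ A | Adj w x} + 1) :=
          sum_le_sum fun u hu => by have := hmax u hu; omega
      _ = #A * (#{w ∈ A | Adj w x} + #{w ∈ A | Adj w x} + 1) := by
          rw [sum_const, smul_eq_mul]
  have := Nat.le_of_mul_le_mul_left h (card_pos.mpr ⟨x, hx⟩)
  omega

theorem two_mul_outDeg_lt_card_of_forall_inDeg_le (hT : IsTournament Adj) {A : Finset V}
    {x : V} (hx : x ∈ A) (hmax : ∀ u ∈ A, #{w ∈ A | Adj w u} ≤ #{w ∈ A | Adj w x}) :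
    2 * #{w ∈ A | Adj x w} < #A := by
  have := hT.outDeg_le_inDeg_of_forall_inDeg_le hx hmax
  have := hT.card_eq_inDeg_add_outDeg_add_one hx
  omega

theorem outDeg_le_outDeg_of_inDeg_le (hT : IsTournament Adj) {A : Finset V} {x u : V}
    (hx : x ∈ A) (hu : u ∈ A) (h : #{w ∈ A | Adj w u} ≤ #{w ∈ A | Adj w x}) :
    #{w ∈ A | Adj x w} ≤ #{w ∈ A | Adj u w} := by
  have := hT.card_eq_inDeg_add_outDeg_add_one hx
  have := hT.card_eq_inDeg_add_outDeg_add_one hu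
  omega

end IsTournament

section CommonOutNbhd

variable {V : Type*} [Fintype V] (Adj : V → V → Prop) [DecidableRel Adj] {k : ℕ}
  (v : Fin k → V)

/-- `greedySet Adj v i` indexed by `i : ℕ`, so that it also exists at `i = k`. -/
def commonOutNbhd (i : ℕ) : Finset V :=
  {w | ∀ j : Fin k, (j : ℕ) < i → Adj (v j) w}

@[simp]
theorem commonOutNbhd_zero : commonOutNbhd Adj v 0 = univ := by
  simp [commonOutNbhd]

theorem coe_commonOutNbhd (i : Fin k) : (commonOutNbhd Adj v i : Set V) = greedySet Adj v i := by
  ext w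
  simp [commonOutNbhd, greedySet]

theorem commonOutNbhd_succ (i : Fin k) :
    commonOutNbhd Adj v (i + 1) = {w ∈ commonOutNbhd Adj v i | Adj (v i) w} := by
  ext w
  simp only [commonOutNbhd, mem_filter, mem_univ, true_and, Nat.lt_succ_iff_lt_or_eq]
  constructor
  · intro h
    exact ⟨fun j hj => h j (Or.inl hj), h i (Or.inr rfl)⟩
  · rintro ⟨h_lt, h_eq⟩ j (hj | hj)
    · exact h_lt j hj
    · rwa [Fin.ext hj]

variable {Adj v}

theorem IsPartialGreedyInDomSeq.forall_inDeg_le (hv : IsPartialGreedyInDomSeq Adj v)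
    (i : Fin k) :
    v i ∈ commonOutNbhd Adj v i ∧ ∀ u ∈ commonOutNbhd Adj v i,
      #{w ∈ commonOutNbhd Adj v i | Adj w u} ≤ #{w ∈ commonOutNbhd Adj v i | Adj w (v i)} := by
  simpa only [← coe_commonOutNbhd, inDegOn_coe_finset, mem_coe] using hv i

theorem two_mul_card_commonOutNbhd_succ_lt (hT : IsTournament Adj)
    (hv : IsPartialGreedyInDomSeq Adj v) (i : Fin k) :
    2 * #(commonOutNbhd Adj v (i + 1)) < #(commonOutNbhd Adj v i) := by
  obtain ⟨hvi, hmax⟩ := hv.forall_inDeg_le i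
  rw [commonOutNbhd_succ]
  exact hT.two_mul_outDeg_lt_card_of_forall_inDeg_le hvi hmax

theorem two_pow_mul_card_commonOutNbhd_le (hT : IsTournament Adj)
    (hv : IsPartialGreedyInDomSeq Adj v) (i : ℕ) {m : ℕ} (h : i + m ≤ k) :
    2 ^ m * #(commonOutNbhd Adj v (i + m)) ≤ #(commonOutNbhd Adj v i) := by
  induction m with
  | zero => simp
  | succ m ih =>
    have h_step := two_mul_card_commonOutNbhd_succ_lt hT hv ⟨i + m, by omega⟩
    calc 2 ^ (m + 1) * #(commonOutNbhd Adj v (i + (m + 1)))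
        = 2 ^ m * (2 * #(commonOutNbhd Adj v (i + m + 1))) := by ring_nf
      _ ≤ 2 ^ m * #(commonOutNbhd Adj v (i + m)) := Nat.mul_le_mul_left _ h_step.le
      _ ≤ #(commonOutNbhd Adj v i) := ih (by omega)

theorem card_commonOutNbhd_one_le_outDeg (hT : IsTournament Adj)
    (hv : IsPartialGreedyInDomSeq Adj v) (hk : 0 < k) (u : V) :
    #(commonOutNbhd Adj v 1) ≤ outDeg Adj u := by
  obtain ⟨hv0, hmax⟩ := hv.forall_inDeg_le ⟨0, hk⟩
  have h := hT.outDeg_le_outDeg_of_inDeg_le hv0 (by simp) (hmax u (by simp))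
  simpa [commonOutNbhd_succ Adj v ⟨0, hk⟩, outDeg_eq_card] using h

end CommonOutNbhd

/-- If `(v_1, …, v_k)` is a partial greedy in-dominating set in a tournament and `E`
is the set of vertices not in-dominated by `{v_1, …, v_k}`, then every `u ∈ E`
satisfies `d⁺(u) ≥ 2^(k-1) |E|`. -/
theorem greedy_in_dominating_set_undominated_have_large_outdegree
    {V : Type*} [Fintype V] (Adj : V → V → Prop) (hT : IsTournament Adj)
    (k : ℕ) (hk : 1 ≤ k) (v : Fin k → V) (hv : IsPartialGreedyInDomSeq Adj v)
    (E : Set V)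
    (hE : E = {u | u ∉ Set.range v ∧ ∀ i : Fin k, ¬ Adj u (v i)}) :
    ∀ u ∈ E, 2 ^ (k - 1) * E.ncard ≤ outDeg Adj u := by
  classical
  intro u _
  have hE_sub : E ⊆ commonOutNbhd Adj v k := by
    rintro w hw
    rw [hE] at hw
    obtain ⟨hw_range, hw_undom⟩ := hw
    simpa [commonOutNbhd] using fun j =>
      (hT.2 (v j) w fun h => hw_range ⟨j, h⟩).2 (hw_undom j)
  have h_halving := two_pow_mul_card_commonOutNbhd_le hT hv 1 (m := k - 1) (by omega)
  rw [Nat.add_sub_cancel' hk] at h_halving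
  calc 2 ^ (k - 1) * E.ncard
      ≤ 2 ^ (k - 1) * #(commonOutNbhd Adj v k) := by
        gcongr
        simpa using Set.ncard_le_ncard hE_sub
    _ ≤ #(commonOutNbhd Adj v 1) := h_halving
    _ ≤ outDeg Adj u := card_commonOutNbhd_one_le_outDeg hT hv hk u
end

section
/- Let T be a tournament, let m ≥ 1, let x_1, ..., x_m, y_1, ..., y_m be 2m distinct vertices of T, and suppose that for every i and j in {1, ..., m} there are at least 4m + 1 internally vertex-disjoint directed paths of length at most 3 from x_i to y_j. Then for any permutation σ of {1, ..., m} there are pairwise vertex-disjoint directed paths P_1, ..., P_m, each of length at most 3, such that P_i goes from x_i to y_{σ(i)}. -/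
section

open Finset Function

variable {V ι : Type*}

def InternallyDisjoint {α : Type*} (x y : V) (Q : α → List V) : Prop :=
  ∀ a b, a ≠ b → ∀ v, v ∈ Q a → v ∈ Q b → v = x ∨ v = y

theorem InternallyDisjoint.exists_avoiding {α : Type*} [Fintype α] {x y : V} {Q : α → List V}
    (hQ : InternallyDisjoint x y Q) (F : Finset V) (hF : #F < Fintype.card α) :
    ∃ a, ∀ v ∈ Q a, v = x ∨ v = y ∨ v ∉ F := by
  by_contra! h
  choose v hvQ hvx hvy hvF using h
  have hinj : Injective fun a => (⟨v a, hvF a⟩ : F) := by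
    intro a b hab
    have hab : v a = v b := congrArg Subtype.val hab
    by_contra hne
    rcases hQ a b hne (v a) (hvQ a) (hab ▸ hvQ b) with h | h
    exacts [hvx a h, hvy a h]
  have := Fintype.card_le_of_injective _ hinj
  simp only [Fintype.card_coe] at this
  omega

namespace IsDipath

variable {Adj : V → V → Prop} {x y : V} {p : List V}

theorem head_mem (h : IsDipath Adj x y p) : x ∈ p :=
  List.mem_of_mem_head? h.2.2.2.1

theorem getLast_mem (h : IsDipath Adj x y p) : y ∈ p :=
  List.mem_of_mem_getLast? h.2.2.2.2

theorem card_interior_le [DecidableEq V] (h : IsDipath Adj x y p) (hxy : x ≠ y) :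
    #(p.toFinset \ {x, y}) ≤ p.length - 2 := by
  have hsub : ({x, y} : Finset V) ⊆ p.toFinset := by
    simp [insert_subset_iff, h.head_mem, h.getLast_mem]
  rw [card_sdiff_of_subset hsub, card_pair hxy]
  exact Nat.sub_le_sub_right (List.toFinset_card_le p) 2

end IsDipath

/-- `ℓ` bounds the number of interior vertices of each path. -/
structure IsPartialLinkage (Adj : V → V → Prop) (s t : ι → V) (ℓ : ℕ) (S : Finset ι)
    (P : ι → List V) : Prop where
  isDipath : ∀ i ∈ S, IsDipath Adj (s i) (t i) (P i)
  length_le : ∀ i ∈ S, (P i).length ≤ ℓ + 2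
  eq_of_terminal_mem : ∀ i ∈ S, ∀ j, s j ∈ P i ∨ t j ∈ P i → j = i
  disjoint : ∀ i ∈ S, ∀ j ∈ S, i ≠ j → ∀ v ∈ P i, v ∉ P j

def forbiddenSet [Fintype ι] [DecidableEq V] (s t : ι → V) (S : Finset ι) (P : ι → List V) :
    Finset V :=
  univ.image s ∪ univ.image t ∪ S.biUnion fun j => (P j).toFinset \ {s j, t j}

section Linkage

variable [Fintype ι] [DecidableEq V] {Adj : V → V → Prop} {s t : ι → V} {ℓ : ℕ}
  {S : Finset ι} {P : ι → List V}

theorem terminal_mem_forbiddenSet (i : ι) :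
    s i ∈ forbiddenSet s t S P ∧ t i ∈ forbiddenSet s t S P := by
  simp [forbiddenSet]

theorem mem_forbiddenSet_of_mem {j : ι} (hj : j ∈ S) {v : V} (hv : v ∈ P j) :
    v ∈ forbiddenSet s t S P := by
  by_cases hvs : v = s j
  · exact hvs ▸ (terminal_mem_forbiddenSet j).1
  by_cases hvt : v = t j
  · exact hvt ▸ (terminal_mem_forbiddenSet j).2
  simp only [forbiddenSet, mem_union, mem_biUnion]
  exact Or.inr ⟨j, hj, by simp [hv, hvs, hvt]⟩

theorem card_forbiddenSet_le (hst : ∀ i j, s i ≠ t j) (hP : IsPartialLinkage Adj s t ℓ S P) :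
    #(forbiddenSet s t S P) ≤ (ℓ + 2) * Fintype.card ι := by
  have hinterior : ∀ j ∈ S, #((P j).toFinset \ {s j, t j}) ≤ ℓ := fun j hj =>
    ((hP.isDipath j hj).card_interior_le (hst j j)).trans (by have := hP.length_le j hj; omega)
  calc #(forbiddenSet s t S P)
      ≤ #(univ.image s) + #(univ.image t) + ∑ j ∈ S, #((P j).toFinset \ {s j, t j}) :=
        (card_union_le _ _).trans (add_le_add (card_union_le _ _) card_biUnion_le)
    _ ≤ Fintype.card ι + Fintype.card ι + #S * ℓ :=
        add_le_add (add_le_add card_image_le card_image_le) (sum_le_card_nsmul _ _ _ hinterior)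
    _ ≤ (ℓ + 2) * Fintype.card ι := by
        have := S.card_le_univ
        nlinarith

theorem IsPartialLinkage.insert [DecidableEq ι] (hs : Injective s) (ht : Injective t)
    (hst : ∀ i j, s i ≠ t j) (hP : IsPartialLinkage Adj s t ℓ S P) {k : ι} (hk : k ∉ S)
    {q : List V} (hq : IsDipath Adj (s k) (t k) q) (hql : q.length ≤ ℓ + 2)
    (hqF : ∀ v ∈ q, v = s k ∨ v = t k ∨ v ∉ forbiddenSet s t S P) :
    IsPartialLinkage Adj s t ℓ (insert k S) (update P k q) := by
  have hq_terminal : ∀ j, s j ∈ q ∨ t j ∈ q → j = k := by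
    rintro j (h | h) <;> rcases hqF _ h with e | e | e
    · exact hs e
    · exact absurd e (hst j k)
    · exact absurd (terminal_mem_forbiddenSet j).1 e
    · exact absurd e.symm (hst k j)
    · exact ht e
    · exact absurd (terminal_mem_forbiddenSet j).2 e
  have hq_disjoint : ∀ j ∈ S, ∀ v ∈ q, v ∉ P j := by
    intro j hj v hv hvj
    rcases hqF v hv with rfl | rfl | h
    · exact hk (hP.eq_of_terminal_mem j hj k (Or.inl hvj) ▸ hj)
    · exact hk (hP.eq_of_terminal_mem j hj k (Or.inr hvj) ▸ hj)
    · exact h (mem_forbiddenSet_of_mem hj hvj)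
  have hupdate : ∀ i ∈ S, update P k q i = P i := fun i hi =>
    update_of_ne (ne_of_mem_of_not_mem hi hk) _ _
  refine ⟨?_, ?_, ?_, ?_⟩ <;> simp only [forall_mem_insert, update_self]
  · exact ⟨hq, fun i hi => hupdate i hi ▸ hP.isDipath i hi⟩
  · exact ⟨hql, fun i hi => hupdate i hi ▸ hP.length_le i hi⟩
  · exact ⟨hq_terminal, fun i hi => hupdate i hi ▸ hP.eq_of_terminal_mem i hi⟩
  · refine ⟨⟨fun h => absurd rfl h, fun j hj _ => hupdate j hj ▸ hq_disjoint j hj⟩,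
      fun i hi => ⟨fun _ v hv hvq => hq_disjoint i hi v hvq (hupdate i hi ▸ hv), ?_⟩⟩
    intro j hj hij
    rw [hupdate i hi, hupdate j hj]
    exact hP.disjoint i hi j hj hij

theorem exists_isPartialLinkage_univ [DecidableEq ι] (hs : Injective s) (ht : Injective t)
    (hst : ∀ i j, s i ≠ t j) {α : Type*} [Fintype α]
    (hα : (ℓ + 2) * Fintype.card ι < Fintype.card α)
    (hpaths : ∀ i, ∃ Q : α → List V, (∀ a, IsDipath Adj (s i) (t i) (Q a) ∧ (Q a).length ≤ ℓ + 2) ∧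
      InternallyDisjoint (s i) (t i) Q) :
    ∃ P, IsPartialLinkage Adj s t ℓ univ P := by
  suffices ∀ S : Finset ι, ∃ P, IsPartialLinkage Adj s t ℓ S P from this univ
  intro S
  induction S using Finset.induction_on with
  | empty => exact ⟨fun _ => [], ⟨by simp, by simp, by simp, by simp⟩⟩
  | insert k S hk ih =>
    obtain ⟨P, hP⟩ := ih
    obtain ⟨Q, hQ, hQdisj⟩ := hpaths k
    obtain ⟨a, ha⟩ :=
      hQdisj.exists_avoiding (forbiddenSet s t S P) ((card_forbiddenSet_le hst hP).trans_lt hα)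
    exact ⟨_, hP.insert hs ht hst hk (hQ a).1 (hQ a).2 ha⟩

end Linkage

end

theorem linkage_from_many_internally_disjoint_short_paths_general
    {V : Type*} [DecidableEq V] (Adj : V → V → Prop)
    (m : ℕ)
    (x y : Fin m → V)
    (hx : Function.Injective x) (hy : Function.Injective y)
    (hxy : ∀ i j, x i ≠ y j)
    (hpaths : ∀ i j : Fin m, ∃ Q : Fin (4 * m + 1) → List V,
      (∀ a, IsDipath Adj (x i) (y j) (Q a) ∧ (Q a).length ≤ 4) ∧
      ∀ a b, a ≠ b → ∀ v, v ∈ Q a → v ∈ Q b → v = x i ∨ v = y j) :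
    ∀ σ : Equiv.Perm (Fin m), ∃ P : Fin m → List V,
      (∀ i, IsDipath Adj (x i) (y (σ i)) (P i) ∧ (P i).length ≤ 4) ∧
      ∀ i j, i ≠ j → ∀ v, v ∈ P i → v ∉ P j := by
  intro σ
  obtain ⟨P, hP⟩ := exists_isPartialLinkage_univ (ℓ := 2) (t := y ∘ σ) hx (hy.comp σ.injective)
    (fun i j => hxy i (σ j)) (by simp only [Fintype.card_fin]; omega) (fun i => hpaths i (σ i))
  exact ⟨P, fun i => ⟨hP.isDipath i (Finset.mem_univ i), hP.length_le i (Finset.mem_univ i)⟩,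
    fun i j hij => hP.disjoint i (Finset.mem_univ i) j (Finset.mem_univ j) hij⟩

/-- Let `x_1, …, x_m, y_1, …, y_m` be `2m` distinct vertices of a tournament, and
suppose that for all `i, j` there are at least `4m + 1` internally vertex-disjoint
directed paths of length at most `3` from `x_i` to `y_j`. Then for any permutation
`σ` of `[m]` there are pairwise vertex-disjoint directed paths `P_1, …, P_m`, each
of length at most `3`, with `P_i` going from `x_i` to `y_{σ(i)}`. -/
theorem linkage_from_many_internally_disjoint_short_paths
    {V : Type*} [Fintype V] [DecidableEq V] (Adj : V → V → Prop)
    (hT : IsTournament Adj) (m : ℕ) (hm : 1 ≤ m)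
    (x y : Fin m → V)
    (hx : Function.Injective x) (hy : Function.Injective y)
    (hxy : ∀ i j, x i ≠ y j)
    (hpaths : ∀ i j : Fin m, ∃ Q : Fin (4 * m + 1) → List V,
      (∀ a, IsDipath Adj (x i) (y j) (Q a) ∧ (Q a).length ≤ 4) ∧
      ∀ a b, a ≠ b → ∀ v, v ∈ Q a → v ∈ Q b → v = x i ∨ v = y j) :
    ∀ σ : Equiv.Perm (Fin m), ∃ P : Fin m → List V,
      (∀ i, IsDipath Adj (x i) (y (σ i)) (P i) ∧ (P i).length ≤ 4) ∧
      ∀ i j, i ≠ j → ∀ v, v ∈ P i → v ∉ P j :=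
  linkage_from_many_internally_disjoint_short_paths_general Adj m x y hx hy hxy hpaths
end
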